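/- Let p be a prime, let G and GT be modules over ZMod p (written additively), let g : G, and let e : G →ₗ[ZMod p] G →ₗ[ZMod p] GT be a ZMod p-bilinear map. Let ℓ ≥ 1, let h : Fin ℓ → ZMod p be pairwise distinct, and let α : ZMod p satisfy α + h i ≠ 0 for all i. Define σ i = (α + h i)⁻¹ • g, γ i = (∏_{j ≠ i} (h j - h i))⁻¹, and σ̂ = ∑_i γ i • σ i. Fix an index j, and define the auxiliary information aux₁ = (∏_{i ≠ j} (α + h i)) • g and aux₂ = (α * ∏_{i ≠ j} (α + h i)) • g. Then e(σ̂, (h j) • aux₁ + aux₂) = e(g, g). -/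
import Mathlib

/-- Sum of Lagrange basis polynomials (at nodes `-h i`) evaluated at `α` equals `1`. -/
theorem epass_key_sum {p : ℕ} (hp : p.Prime) {ℓ : ℕ} (hℓ : 1 ≤ ℓ)
    (h : Fin ℓ → ZMod p) (hh : Function.Injective h) (α : ZMod p) :
    ∑ i : Fin ℓ, (∏ k ∈ Finset.univ.erase i, ((h k - h i)⁻¹ * (α + h k))) = 1 := by
  haveI := Fact.mk hp
  have hv : Set.InjOn (fun i => -h i) (Finset.univ : Finset (Fin ℓ)) := by
    intro a _ b _ hab
    exact hh (neg_injective hab)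
  have hne : (Finset.univ : Finset (Fin ℓ)).Nonempty := ⟨⟨0, hℓ⟩, Finset.mem_univ _⟩
  have hsum := congrArg (Polynomial.eval α) (Lagrange.sum_basis hv hne)
  simpa [Lagrange.basis, Lagrange.basisDivisor, Polynomial.eval_finset_sum,
    Polynomial.eval_prod, sub_neg_eq_add, neg_sub_neg, neg_add_eq_sub] using hsum

/-- Correctness of local (subset) verification in Epass.ReleasedDec. -/
theorem epass_local_verification {p : ℕ} (hp : p.Prime) {G GT : Type*}
    [AddCommGroup G] [Module (ZMod p) G] [AddCommGroup GT] [Module (ZMod p) GT]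
    (g : G) (e : G →ₗ[ZMod p] G →ₗ[ZMod p] GT)
    {ℓ : ℕ} (hℓ : 1 ≤ ℓ) (h : Fin ℓ → ZMod p) (hh : Function.Injective h)
    (α : ZMod p) (hα : ∀ i, α + h i ≠ 0)
    (σ : Fin ℓ → G) (hσ : ∀ i, σ i = (α + h i)⁻¹ • g)
    (γ : Fin ℓ → ZMod p)
    (hγ : ∀ i, γ i = (∏ j ∈ Finset.univ.erase i, (h j - h i))⁻¹)
    (σhat : G) (hσhat : σhat = ∑ i : Fin ℓ, γ i • σ i)
    (j : Fin ℓ)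
    (aux₁ aux₂ : G)
    (haux₁ : aux₁ = (∏ i ∈ Finset.univ.erase j, (α + h i)) • g)
    (haux₂ : aux₂ = (α * ∏ i ∈ Finset.univ.erase j, (α + h i)) • g) :
    e σhat ((h j) • aux₁ + aux₂) = e g g := by
  haveI := Fact.mk hp
  set P : ZMod p := ∏ i : Fin ℓ, (α + h i) with hP
  have harg : (h j) • aux₁ + aux₂ = P • g := by
    rw [haux₁, haux₂, smul_smul, ← add_smul, hP,
      ← Finset.mul_prod_erase Finset.univ _ (Finset.mem_univ j)]
    ring_nf
  rw [harg, hσhat]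
  have hterm : ∀ i : Fin ℓ, e (γ i • σ i) (P • g)
      = (∏ k ∈ Finset.univ.erase i, ((h k - h i)⁻¹ * (α + h k))) • e g g := by
    intro i
    have hcancel : (α + h i)⁻¹ * P = ∏ k ∈ Finset.univ.erase i, (α + h k) := by
      rw [hP, ← Finset.mul_prod_erase Finset.univ _ (Finset.mem_univ i),
        ← mul_assoc, inv_mul_cancel₀ (hα i), one_mul]
    rw [hσ i]
    simp only [map_smul, LinearMap.smul_apply, smul_smul]
    congr 1
    rw [Finset.prod_mul_distrib, Finset.prod_inv_distrib, ← hγ i, ← hcancel]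
    ring
  rw [map_sum, LinearMap.sum_apply]
  simp_rw [hterm]
  rw [← Finset.sum_smul, epass_key_sum hp hℓ h hh α, one_smul]
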